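/- arXiv:1605.07086 — 5 statements merged into one kernel-verified Lean document; each statement's English description precedes it below -/
import Mathlib

section
/- For any β ∈ [0,1], a ≥ 0, z ∈ ℝ^d with |z| ≤ 1, and u ∈ 𝒮(ℝ^d), one has ∫_{|x|≥a}|u(x+z) − u(x)| dx ≤ 2^{1−β} (∫_{|x|≥(a−1)∨0}|u(x)| dx)^{1−β} (∫_{|x|≥(a−1)∨0}|∇u(x)| dx)^{β} |z|^{β}. -/
/-! Write `A` for the left-hand side. For `|w| ≤ 1` the translation `x ↦ x + w` maps
`{a ≤ |x|}` into `{(a - 1) ∨ 0 ≤ |x|}`. The triangle inequality and two such translations give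
`A ≤ 2 ∫ |u|`; the fundamental theorem of calculus along `t ↦ x + t z`, Tonelli and the
translations by `t z`, `t ∈ (0, 1]`, give `A ≤ |z| ∫ |∇u|`. Since `A = A^{1-β} A^β`, the two
bounds interpolate. -/

open MeasureTheory
open scoped ENNReal

noncomputable section

abbrev Rd (d : ℕ) := EuclideanSpace ℝ (Fin d)

open Set

lemma Real.le_rpow_one_sub_mul_rpow {A X Y β : ℝ} (hA : 0 ≤ A) (hX : A ≤ X) (hY : A ≤ Y)
    (hβ₀ : 0 ≤ β) (hβ₁ : β ≤ 1) : A ≤ X ^ (1 - β) * Y ^ β :=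
  calc A = A ^ (1 - β) * A ^ β := by
        rw [← Real.rpow_add' hA (by norm_num), sub_add_cancel, Real.rpow_one]
    _ ≤ X ^ (1 - β) * Y ^ β :=
        mul_le_mul (Real.rpow_le_rpow hA hX (by linarith)) (Real.rpow_le_rpow hA hY hβ₀)
          (Real.rpow_nonneg hA _) (Real.rpow_nonneg (hA.trans hX) _)

lemma norm_gradient_eq_norm_fderiv {E : Type*} [NormedAddCommGroup E] [InnerProductSpace ℝ E]
    [CompleteSpace E] (f : E → ℝ) (x : E) : ‖gradient f x‖ = ‖fderiv ℝ f x‖ :=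
  (InnerProductSpace.toDual ℝ E).symm.norm_map _

lemma integral_norm_le_toReal_mul_integral_norm {α β F G : Type*} [MeasurableSpace α]
    [MeasurableSpace β] {μ : Measure α} {ν : Measure β} [NormedAddCommGroup F]
    [NormedAddCommGroup G] {g : α → F} {h : β → G} {c : ℝ≥0∞} (hg : AEStronglyMeasurable g μ)
    (hh : Integrable h ν) (hc : c ≠ ∞) (hle : ∫⁻ x, ‖g x‖ₑ ∂μ ≤ c * ∫⁻ y, ‖h y‖ₑ ∂ν) :
    ∫ x, ‖g x‖ ∂μ ≤ c.toReal * ∫ y, ‖h y‖ ∂ν := by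
  rw [integral_norm_eq_lintegral_enorm hg, integral_norm_eq_lintegral_enorm hh.1,
    ← ENNReal.toReal_mul]
  exact ENNReal.toReal_mono (ENNReal.mul_ne_top hc (hasFiniteIntegral_iff_enorm.mp hh.2).ne) hle

lemma enorm_sub_le_lintegral_enorm_fderiv {E F : Type*} [NormedAddCommGroup E] [NormedSpace ℝ E]
    [NormedAddCommGroup F] [NormedSpace ℝ F] [CompleteSpace F] {f : E → F}
    (hf : ContDiff ℝ 1 f) (x z : E) :
    ‖f (x + z) - f x‖ₑ ≤ ∫⁻ t in Ioc (0 : ℝ) 1, ‖fderiv ℝ f (x + t • z)‖ₑ * ‖z‖ₑ := by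
  have hderiv (t : ℝ) :
      HasDerivAt (fun s : ℝ => f (x + s • z)) (fderiv ℝ f (x + t • z) z) t := by
    refine (hf.differentiable one_ne_zero _).hasFDerivAt.comp_hasDerivAt t ?_
    simpa using ((hasDerivAt_id t).smul_const z).const_add x
  have hcont : Continuous fun t : ℝ => fderiv ℝ f (x + t • z) z :=
    ((hf.continuous_fderiv one_ne_zero).comp (by fun_prop)).clm_apply continuous_const
  have hFTC : f (x + z) - f x = ∫ t in Ioc (0 : ℝ) 1, fderiv ℝ f (x + t • z) z := by
    rw [← intervalIntegral.integral_of_le zero_le_one,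
      intervalIntegral.integral_eq_sub_of_hasDerivAt (fun t _ => hderiv t)
        (hcont.intervalIntegrable 0 1)]
    simp
  rw [hFTC]
  exact (enorm_integral_le_lintegral_enorm _).trans
    (lintegral_mono fun t => (fderiv ℝ f (x + t • z)).le_opENorm z)

section Translation

variable {E F : Type*} [NormedAddCommGroup E] [NormedAddCommGroup F]

lemma setOf_le_norm_subset_preimage_add_right {a r : ℝ} {w : E} (hw : ‖w‖ ≤ r) :
    {x : E | a ≤ ‖x‖} ⊆ (· + w) ⁻¹' {x | max (a - r) 0 ≤ ‖x‖} := fun x (hx : a ≤ ‖x‖) => by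
  have := norm_le_norm_add_norm_sub (x + w) x
  rw [add_sub_cancel_left] at this
  exact max_le (by linarith) (norm_nonneg _)

variable [MeasurableSpace E] [MeasurableAdd E] {μ : Measure E} [μ.IsAddRightInvariant]
  {S T : Set E}

lemma setLIntegral_comp_add_right_le {w : E} (hST : S ⊆ (· + w) ⁻¹' T) (f : E → ℝ≥0∞) :
    ∫⁻ x in S, f (x + w) ∂μ ≤ ∫⁻ x in T, f x ∂μ :=
  (lintegral_mono_set hST).trans_eq <|
    (measurePreserving_add_right μ w).setLIntegral_comp_preimage_emb
      (MeasurableEquiv.addRight w).measurableEmbedding f T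

lemma setLIntegral_enorm_sub_comp_add_right_le_two_mul {f : E → F} (hf : AEStronglyMeasurable f μ)
    {z : E} (hz : S ⊆ (· + z) ⁻¹' T) (h₀ : S ⊆ T) :
    ∫⁻ x in S, ‖f (x + z) - f x‖ₑ ∂μ ≤ 2 * ∫⁻ x in T, ‖f x‖ₑ ∂μ :=
  calc ∫⁻ x in S, ‖f (x + z) - f x‖ₑ ∂μ ≤ ∫⁻ x in S, (‖f (x + z)‖ₑ + ‖f x‖ₑ) ∂μ :=
        lintegral_mono fun _ => enorm_sub_le
    _ = ∫⁻ x in S, ‖f (x + z)‖ₑ ∂μ + ∫⁻ x in S, ‖f x‖ₑ ∂μ :=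
        lintegral_add_right' _ hf.enorm.restrict
    _ ≤ ∫⁻ x in T, ‖f x‖ₑ ∂μ + ∫⁻ x in T, ‖f x‖ₑ ∂μ :=
        add_le_add (setLIntegral_comp_add_right_le hz _) (lintegral_mono_set h₀)
    _ = 2 * ∫⁻ x in T, ‖f x‖ₑ ∂μ := (two_mul _).symm

variable [NormedSpace ℝ E] [NormedSpace ℝ F] [CompleteSpace F] [BorelSpace E] [SFinite μ]

lemma setLIntegral_enorm_sub_comp_add_right_le_mul {f : E → F} (hf : ContDiff ℝ 1 f) {z : E}
    (hST : ∀ t ∈ Ioc (0 : ℝ) 1, S ⊆ (· + t • z) ⁻¹' T) :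
    ∫⁻ x in S, ‖f (x + z) - f x‖ₑ ∂μ ≤ ‖z‖ₑ * ∫⁻ x in T, ‖fderiv ℝ f x‖ₑ ∂μ := by
  have hmeas : AEMeasurable (Function.uncurry fun x (t : ℝ) => ‖fderiv ℝ f (x + t • z)‖ₑ * ‖z‖ₑ)
      ((μ.restrict S).prod (volume.restrict (Ioc 0 1))) :=
    ((hf.continuous_fderiv one_ne_zero).comp (by fun_prop)).enorm.measurable.mul_const _
      |>.aemeasurable
  calc ∫⁻ x in S, ‖f (x + z) - f x‖ₑ ∂μ
      ≤ ∫⁻ x in S, (∫⁻ t in Ioc (0 : ℝ) 1, ‖fderiv ℝ f (x + t • z)‖ₑ * ‖z‖ₑ) ∂μ :=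
        lintegral_mono fun x => enorm_sub_le_lintegral_enorm_fderiv hf x z
    _ = ∫⁻ t in Ioc (0 : ℝ) 1, (∫⁻ x in S, ‖fderiv ℝ f (x + t • z)‖ₑ ∂μ) * ‖z‖ₑ := by
        rw [lintegral_lintegral_swap hmeas]
        simp_rw [lintegral_mul_const' _ _ enorm_ne_top]
    _ ≤ ∫⁻ t in Ioc (0 : ℝ) 1, (∫⁻ x in T, ‖fderiv ℝ f x‖ₑ ∂μ) * ‖z‖ₑ :=
        setLIntegral_mono' measurableSet_Ioc fun t ht =>
          mul_le_mul_left (setLIntegral_comp_add_right_le (hST t ht) _) _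
    _ = ‖z‖ₑ * ∫⁻ x in T, ‖fderiv ℝ f x‖ₑ ∂μ := by
        rw [setLIntegral_const, Real.volume_Ioc, sub_zero, ENNReal.ofReal_one, mul_one, mul_comm]

end Translation

theorem statement_5_general (d : ℕ) (β a : ℝ) (hβ : β ∈ Set.Icc (0:ℝ) 1)
    (z : Rd d) (hz : ‖z‖ ≤ 1) (u : SchwartzMap (Rd d) ℝ) :
    (∫ x in {x : Rd d | a ≤ ‖x‖}, |u (x + z) - u x|)
      ≤ 2 ^ (1 - β)
        * (∫ x in {x : Rd d | max (a - 1) 0 ≤ ‖x‖}, |u x|) ^ (1 - β)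
        * (∫ x in {x : Rd d | max (a - 1) 0 ≤ ‖x‖}, ‖gradient (⇑u) x‖) ^ β
        * ‖z‖ ^ β := by
  set S := {x : Rd d | a ≤ ‖x‖}
  set T := {x : Rd d | max (a - 1) 0 ≤ ‖x‖}
  have hshift (w : Rd d) (hw : ‖w‖ ≤ 1) : S ⊆ (· + w) ⁻¹' T :=
    setOf_le_norm_subset_preimage_add_right hw
  have hdiff : AEStronglyMeasurable (fun x => u (x + z) - u x) (volume.restrict S) :=
    (u.continuous.comp (continuous_add_const z)).sub u.continuous |>.aestronglyMeasurable
  have hDu : Integrable (fderiv ℝ u) :=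
    (SchwartzMap.fderivCLM ℝ (Rd d) ℝ u).integrable.congr
      (ae_of_all _ (SchwartzMap.fderivCLM_apply ℝ u))
  have h_mass : ∫ x in S, |u (x + z) - u x| ≤ 2 * ∫ x in T, |u x| := by
    simpa only [Real.norm_eq_abs, ENNReal.toReal_ofNat] using
      integral_norm_le_toReal_mul_integral_norm hdiff u.integrable.integrableOn
        ENNReal.ofNat_ne_top <| setLIntegral_enorm_sub_comp_add_right_le_two_mul
          u.continuous.aestronglyMeasurable (hshift z hz) (by simpa using hshift 0 (by simp))
  have h_grad : ∫ x in S, |u (x + z) - u x| ≤ ‖z‖ * ∫ x in T, ‖gradient u x‖ := by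
    simp_rw [norm_gradient_eq_norm_fderiv]
    simpa only [Real.norm_eq_abs, toReal_enorm] using
      integral_norm_le_toReal_mul_integral_norm hdiff hDu.integrableOn enorm_ne_top <|
        setLIntegral_enorm_sub_comp_add_right_le_mul (u.smooth 1) fun t ht => hshift (t • z) <| by
          rw [norm_smul, Real.norm_of_nonneg ht.1.le]
          exact mul_le_one₀ ht.2 (norm_nonneg z) hz
  calc ∫ x in S, |u (x + z) - u x|
      ≤ (2 * ∫ x in T, |u x|) ^ (1 - β) * (‖z‖ * ∫ x in T, ‖gradient u x‖) ^ β :=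
        Real.le_rpow_one_sub_mul_rpow (integral_nonneg fun _ => abs_nonneg _) h_mass h_grad
          hβ.1 hβ.2
    _ = _ := by
        rw [Real.mul_rpow zero_le_two (integral_nonneg fun _ => abs_nonneg _),
          Real.mul_rpow (norm_nonneg z) (integral_nonneg fun _ => norm_nonneg _)]
        ring

/-- for `β ∈ [0,1]`, `a ≥ 0`, `|z| ≤ 1` and Schwartz `u`,
`∫_{|x|≥a}|u(x+z) − u(x)| dx ≤ 2^{1−β} (∫_{|x|≥(a−1)∨0}|u|)^{1−β} (∫_{|x|≥(a−1)∨0}|∇u|)^β |z|^β`. -/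
theorem statement_5 (d : ℕ) (β a : ℝ) (hβ : β ∈ Set.Icc (0:ℝ) 1) (ha : 0 ≤ a)
    (z : Rd d) (hz : ‖z‖ ≤ 1) (u : SchwartzMap (Rd d) ℝ) :
    (∫ x in {x : Rd d | a ≤ ‖x‖}, |u (x + z) - u x|)
      ≤ 2 ^ (1 - β)
        * (∫ x in {x : Rd d | max (a - 1) 0 ≤ ‖x‖}, |u x|) ^ (1 - β)
        * (∫ x in {x : Rd d | max (a - 1) 0 ≤ ‖x‖}, ‖gradient (⇑u) x‖) ^ β
        * ‖z‖ ^ β :=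
  statement_5_general d β a hβ z hz u
end
end

section
/- Let σ ∈ (0,2) and π ∈ 𝔄^σ satisfy ∫_{|z|≤1}|z|^{α₁}π(dz) + ∫_{|z|>1}|z|^{α₂}π(dz) ≤ N, where α₁, α₂ ∈ (0,1] if σ ∈ (0,1); α₁, α₂ ∈ (1,2] if σ ∈ (1,2); and α₁ ∈ (1,2], α₂ ∈ [0,1) if σ = 1. Let t > 0 and let 𝓛_t be a probability measure on ℝ^d whose Fourier transform equals exp{t ψ^π(ξ)} for all ξ. Then for each δ > 0 there is a constant C = C(δ,N), independent of t, such that 𝓛_t({y : |y| > δ}) ≤ C t. -/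
open MeasureTheory
open scoped ENNReal RealInnerProductSpace

noncomputable section

variable {d : ℕ}

/-- The truncation function `χ_σ`. -/
def chiSigma (σ : ℝ) (y : Rd d) : ℝ :=
  if σ < 1 then 0 else if σ = 1 then (if ‖y‖ ≤ 1 then 1 else 0) else 1

/-- Membership in the class `𝔄^σ`. -/
def MemA (σ : ℝ) (ν : Measure (Rd d)) : Prop :=
  ν {0} = 0 ∧
  (∫⁻ y, ENNReal.ofReal (min (‖y‖ ^ 2) 1) ∂ν) < ∞ ∧
  σ = sInf {α : ℝ | α < 2 ∧ (∫⁻ y in {y : Rd d | ‖y‖ ≤ 1}, ENNReal.ofReal (‖y‖ ^ α) ∂ν) < ∞} ∧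
  (1 < σ → (∫⁻ y in {y : Rd d | 1 < ‖y‖}, ENNReal.ofReal ‖y‖ ∂ν) < ∞) ∧
  (σ = 1 → ∀ R R' : ℝ, 0 < R → R < R' →
    (∫ y in {y : Rd d | R < ‖y‖ ∧ ‖y‖ ≤ R'}, y ∂ν) = 0)

/-- The symbol `ψ^π`. -/
def symb (σ : ℝ) (ν : Measure (Rd d)) (ξ : Rd d) : ℂ :=
  ∫ y, (Complex.exp (Complex.I * ((2 * Real.pi * ⟪ξ, y⟫ : ℝ) : ℂ))
        - 1 - Complex.I * ((2 * Real.pi * chiSigma σ y * ⟪ξ, y⟫ : ℝ) : ℂ)) ∂ν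

/-- The Fourier transform of a finite measure, `ξ ↦ ∫ e^{i2πξ·x} μ(dx)`. -/
def charFun (μ : Measure (Rd d)) (ξ : Rd d) : ℂ :=
  ∫ x, Complex.exp (Complex.I * ((2 * Real.pi * ⟪ξ, x⟫ : ℝ) : ℂ)) ∂μ

/-!
The exponent conditions are exactly what makes `|e^{iθ} - 1 - iχθ| ≤ 3|θ|^α` hold (`α ≤ 1` where
`χ = 0`, `α ≥ 1` where `χ = 1`), so the Lévy–Khintchine integrand is bounded by `3 (2π|ξ||y|)^α₁`
near the origin and by `3 (2π|ξ||y|)^α₂` away from it, and the moment bound gives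
`|ψ(ξ)| ≤ K(R)` on the ball `|ξ| ≤ R`. As `|e^{tψ}| = |𝓛̂_t| ≤ 1`, this yields
`|1 - 𝓛̂_t(ξ)| ≤ 2t|ψ(ξ)| ≤ 2tK(R)` there. The truncation inequality
`μ{|x_i| > r} ≤ (r/2) |∫_{-2/r}^{2/r} (1 - μ̂)|` turns this into a bound `O(t)` for each
coordinate tail, and `{|y| > δ}` is covered by `d` coordinate tails.
-/

lemma min_rpow_le_rpow {x a b α : ℝ} (hx : 0 ≤ x) (ha : 0 ≤ a) (haα : a ≤ α) (hαb : α ≤ b) :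
    min (x ^ a) (x ^ b) ≤ x ^ α := by
  rcases le_total x 1 with h | h
  · exact (min_le_right _ _).trans (Real.rpow_le_rpow_of_exponent_ge' hx h (ha.trans haα) hαb)
  · exact (min_le_left _ _).trans (Real.rpow_le_rpow_of_exponent_le h haα)

lemma norm_exp_I_mul_sub_one_le_min (θ : ℝ) :
    ‖Complex.exp (Complex.I * θ) - 1‖ ≤ 2 * min 1 |θ| := by
  rw [mul_min_of_nonneg _ _ zero_le_two]
  refine le_min ?_ ((Real.norm_exp_I_mul_ofReal_sub_one_le).trans ?_)
  · calc _ ≤ ‖Complex.exp (Complex.I * θ)‖ + ‖(1 : ℂ)‖ := norm_sub_le _ _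
      _ = 2 * 1 := by rw [Complex.norm_exp_I_mul_ofReal, norm_one]; norm_num
  · rw [Real.norm_eq_abs]; linarith [abs_nonneg θ]

lemma norm_exp_I_mul_sub_one_sub_le_min (θ : ℝ) :
    ‖Complex.exp (Complex.I * θ) - 1 - Complex.I * θ‖ ≤ 3 * min |θ| (|θ| ^ 2) := by
  have hIθ : ‖Complex.I * θ‖ = |θ| := by simp
  rcases le_or_gt |θ| 1 with h | h
  · have := Complex.norm_exp_sub_one_sub_id_le (x := Complex.I * θ) (hIθ ▸ h)
    rw [hIθ] at this
    rw [min_eq_right (by nlinarith [abs_nonneg θ])]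
    nlinarith [sq_nonneg |θ|]
  · rw [min_eq_left (by nlinarith)]
    calc _ ≤ ‖Complex.exp (Complex.I * θ) - 1‖ + ‖Complex.I * θ‖ := norm_sub_le _ _
      _ ≤ 2 * min 1 |θ| + |θ| := by rw [hIθ]; gcongr; exact norm_exp_I_mul_sub_one_le_min θ
      _ ≤ 3 * |θ| := by linarith [min_le_left 1 |θ|]

lemma norm_exp_I_mul_sub_one_sub_mul_le_rpow {θ c α : ℝ}
    (h : (c = 0 ∧ α ∈ Set.Icc 0 1) ∨ (c = 1 ∧ α ∈ Set.Icc 1 2)) :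
    ‖Complex.exp (Complex.I * θ) - 1 - Complex.I * (c * θ : ℝ)‖ ≤ 3 * |θ| ^ α := by
  rcases h with ⟨rfl, h0, h1⟩ | ⟨rfl, h1, h2⟩
  · have := min_rpow_le_rpow (abs_nonneg θ) le_rfl h0 h1
    simp only [Real.rpow_zero, Real.rpow_one] at this
    simp only [zero_mul, Complex.ofReal_zero, mul_zero, sub_zero]
    linarith [norm_exp_I_mul_sub_one_le_min θ, Real.rpow_nonneg (abs_nonneg θ) α]
  · have := min_rpow_le_rpow (abs_nonneg θ) zero_le_one h1 h2
    simp only [Real.rpow_one, Real.rpow_two] at this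
    simp only [one_mul]
    linarith [norm_exp_I_mul_sub_one_sub_le_min θ]

lemma norm_exp_sub_one_le_two_mul_norm {z : ℂ} (hz : ‖Complex.exp z‖ ≤ 1) :
    ‖Complex.exp z - 1‖ ≤ 2 * ‖z‖ := by
  rcases le_or_gt ‖z‖ 1 with h | h
  · exact Complex.norm_exp_sub_one_le h
  · calc _ ≤ ‖Complex.exp z‖ + ‖(1 : ℂ)‖ := norm_sub_le _ _
      _ ≤ 2 * ‖z‖ := by rw [norm_one]; linarith

def AdmissibleExponents (σ α1 α2 : ℝ) : Prop :=
  (σ < 1 → α1 ∈ Set.Ioc (0:ℝ) 1 ∧ α2 ∈ Set.Ioc (0:ℝ) 1) ∧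
  (1 < σ → α1 ∈ Set.Ioc (1:ℝ) 2 ∧ α2 ∈ Set.Ioc (1:ℝ) 2) ∧
  (σ = 1 → α1 ∈ Set.Ioc (1:ℝ) 2 ∧ α2 ∈ Set.Ico (0:ℝ) 1)

namespace AdmissibleExponents

variable {σ α1 α2 : ℝ}

lemma chiSigma_cases_of_norm_le_one (h : AdmissibleExponents σ α1 α2) {y : Rd d}
    (hy : ‖y‖ ≤ 1) :
    (chiSigma σ y = 0 ∧ α1 ∈ Set.Icc 0 1) ∨ (chiSigma σ y = 1 ∧ α1 ∈ Set.Icc 1 2) := by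
  obtain ⟨h1, h2, h3⟩ := h
  rcases lt_trichotomy σ 1 with hσ | rfl | hσ
  · exact .inl ⟨by simp [chiSigma, hσ], Set.Ioc_subset_Icc_self (h1 hσ).1⟩
  · exact .inr ⟨by simp [chiSigma, hy], Set.Ioc_subset_Icc_self (h3 rfl).1⟩
  · exact .inr ⟨by simp [chiSigma, hσ.not_gt, hσ.ne'], Set.Ioc_subset_Icc_self (h2 hσ).1⟩

lemma chiSigma_cases_of_one_lt_norm (h : AdmissibleExponents σ α1 α2) {y : Rd d}
    (hy : 1 < ‖y‖) :
    (chiSigma σ y = 0 ∧ α2 ∈ Set.Icc 0 1) ∨ (chiSigma σ y = 1 ∧ α2 ∈ Set.Icc 1 2) := by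
  obtain ⟨h1, h2, h3⟩ := h
  rcases lt_trichotomy σ 1 with hσ | rfl | hσ
  · exact .inl ⟨by simp [chiSigma, hσ], Set.Ioc_subset_Icc_self (h1 hσ).2⟩
  · exact .inl ⟨by simp [chiSigma, hy.not_ge], Set.Ico_subset_Icc_self (h3 rfl).2⟩
  · exact .inr ⟨by simp [chiSigma, hσ.not_gt, hσ.ne'], Set.Ioc_subset_Icc_self (h2 hσ).2⟩

end AdmissibleExponents

def levyIntegrand (σ : ℝ) (ξ y : Rd d) : ℂ :=
  Complex.exp (Complex.I * ((2 * Real.pi * ⟪ξ, y⟫ : ℝ) : ℂ))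
    - 1 - Complex.I * ((2 * Real.pi * chiSigma σ y * ⟪ξ, y⟫ : ℝ) : ℂ)

lemma norm_levyIntegrand_le {σ α R : ℝ} {ξ y : Rd d} (hξ : ‖ξ‖ ≤ R)
    (h : (chiSigma σ y = 0 ∧ α ∈ Set.Icc 0 1) ∨ (chiSigma σ y = 1 ∧ α ∈ Set.Icc 1 2)) :
    ‖levyIntegrand σ ξ y‖ ≤ 3 * (2 * Real.pi * R) ^ α * ‖y‖ ^ α := by
  have hα : 0 ≤ α := by rcases h with ⟨-, h, -⟩ | ⟨-, h, -⟩ <;> linarith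
  have hθ : |2 * Real.pi * ⟪ξ, y⟫| ≤ 2 * Real.pi * R * ‖y‖ := by
    rw [abs_mul, abs_of_pos Real.two_pi_pos, mul_assoc _ R]
    gcongr
    exact (abs_real_inner_le_norm ξ y).trans (by gcongr)
  calc ‖levyIntegrand σ ξ y‖ ≤ 3 * |2 * Real.pi * ⟪ξ, y⟫| ^ α := by
        rw [levyIntegrand, show 2 * Real.pi * chiSigma σ y * ⟪ξ, y⟫
          = chiSigma σ y * (2 * Real.pi * ⟪ξ, y⟫) by ring]
        exact norm_exp_I_mul_sub_one_sub_mul_le_rpow h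
    _ ≤ 3 * (2 * Real.pi * R) ^ α * ‖y‖ ^ α := by
        have hR : 0 ≤ R := (norm_nonneg ξ).trans hξ
        rw [mul_assoc 3, ← Real.mul_rpow (by positivity) (norm_nonneg y)]
        gcongr

lemma setLIntegral_ofReal_le_const_mul {α : Type*} [MeasurableSpace α] {μ : Measure α}
    {s : Set α} (hs : MeasurableSet s) {f g : α → ℝ} {c : ℝ} (hc : 0 ≤ c)
    (hfg : ∀ x ∈ s, f x ≤ c * g x) :
    ∫⁻ x in s, ENNReal.ofReal (f x) ∂μ ≤ ENNReal.ofReal c * ∫⁻ x in s, ENNReal.ofReal (g x) ∂μ := by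
  rw [← lintegral_const_mul' _ _ ENNReal.ofReal_ne_top]
  refine lintegral_mono_ae ((ae_restrict_iff' hs).2 (ae_of_all _ fun x hx => ?_))
  rw [← ENNReal.ofReal_mul hc]
  exact ENNReal.ofReal_le_ofReal (hfg x hx)

lemma norm_symb_le {σ α1 α2 N R : ℝ} {ν : Measure (Rd d)} (hα : AdmissibleExponents σ α1 α2)
    (hmom : (∫⁻ z in {z : Rd d | ‖z‖ ≤ 1}, ENNReal.ofReal (‖z‖ ^ α1) ∂ν)
        + (∫⁻ z in {z : Rd d | 1 < ‖z‖}, ENNReal.ofReal (‖z‖ ^ α2) ∂ν)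
        ≤ ENNReal.ofReal N) (hN : 0 ≤ N) {ξ : Rd d} (hξ : ‖ξ‖ ≤ R) :
    ‖symb σ ν ξ‖ ≤ 3 * ((2 * Real.pi * R) ^ α1 + (2 * Real.pi * R) ^ α2) * N := by
  set K := 3 * ((2 * Real.pi * R) ^ α1 + (2 * Real.pi * R) ^ α2)
  have hR : 0 ≤ R := (norm_nonneg ξ).trans hξ
  have hS : MeasurableSet {y : Rd d | ‖y‖ ≤ 1} := measurableSet_le (by fun_prop) (by fun_prop)
  have hSc : {y : Rd d | ‖y‖ ≤ 1}ᶜ = {y : Rd d | 1 < ‖y‖} := by ext; simp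
  have hlint : ∫⁻ y, ENNReal.ofReal ‖levyIntegrand σ ξ y‖ ∂ν ≤ ENNReal.ofReal (K * N) := by
    rw [← lintegral_add_compl _ hS, hSc, ENNReal.ofReal_mul (by positivity)]
    refine le_trans (add_le_add ?_ ?_) ((mul_add _ _ _).symm.trans_le (mul_le_mul_right hmom _))
    · refine setLIntegral_ofReal_le_const_mul hS (by positivity) fun y hy => ?_
      refine (norm_levyIntegrand_le hξ (hα.chiSigma_cases_of_norm_le_one hy)).trans ?_
      have : 0 ≤ (2 * Real.pi * R) ^ α2 := by positivity
      gcongr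
      linarith
    · refine setLIntegral_ofReal_le_const_mul (hSc ▸ hS.compl) (by positivity) fun y hy => ?_
      refine (norm_levyIntegrand_le hξ (hα.chiSigma_cases_of_one_lt_norm hy)).trans ?_
      have : 0 ≤ (2 * Real.pi * R) ^ α1 := by positivity
      gcongr
      linarith
  -- `symb σ ν ξ` is by definition `∫ y, levyIntegrand σ ξ y ∂ν`.
  exact (norm_integral_le_lintegral_norm _).trans
    (ENNReal.toReal_le_of_le_ofReal (by positivity) hlint)

lemma norm_le_sum_abs_apply {ι : Type*} [Fintype ι] (y : EuclideanSpace ℝ ι) :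
    ‖y‖ ≤ ∑ i, |y i| := by
  conv_lhs => rw [← (EuclideanSpace.basisFun ι ℝ).sum_repr y]
  refine (norm_sum_le _ _).trans_eq (Finset.sum_congr rfl fun i _ => ?_)
  simp [norm_smul]

lemma exists_lt_abs_apply_of_card_mul_lt_norm {ι : Type*} [Fintype ι] {y : EuclideanSpace ℝ ι}
    {r : ℝ} (h : Fintype.card ι * r < ‖y‖) : ∃ i, r < |y i| := by
  have : ∑ _i : ι, r < ∑ i, |y i| := by
    simpa using h.trans_le (norm_le_sum_abs_apply y)
  simpa using Finset.exists_lt_of_sum_lt this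

lemma charFun_eq_charFun_two_pi_smul (μ : Measure (Rd d)) (ξ : Rd d) :
    _root_.charFun μ ξ = MeasureTheory.charFun μ ((2 * Real.pi) • ξ) := by
  simp only [_root_.charFun, MeasureTheory.charFun_apply, inner_smul_right, real_inner_comm ξ]
  congr! 3 with x
  push_cast
  ring

lemma norm_charFun_le_one' (μ : Measure (Rd d)) [IsProbabilityMeasure μ] (ξ : Rd d) :
    ‖_root_.charFun μ ξ‖ ≤ 1 := by
  rw [charFun_eq_charFun_two_pi_smul]
  exact norm_charFun_le_one _

lemma measureReal_lt_abs_inner_le_of_charFun (μ : Measure (Rd d)) [IsProbabilityMeasure μ]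
    {a : Rd d} {r M : ℝ} (hr : 0 < r)
    (hM : ∀ ξ : Rd d, ‖ξ‖ ≤ ‖a‖ / (Real.pi * r) → ‖1 - _root_.charFun μ ξ‖ ≤ M) :
    μ.real {x | r < |⟪a, x⟫|} ≤ 2 * M := by
  have hint : ‖∫ t in -2 * r⁻¹..2 * r⁻¹, 1 - MeasureTheory.charFun μ (t • a)‖
      ≤ M * |2 * r⁻¹ - -2 * r⁻¹| := by
    refine intervalIntegral.norm_integral_le_of_norm_le_const fun t ht => ?_
    have ht : |t| ≤ 2 * r⁻¹ := by
      rw [Set.uIoc_of_le (by linarith [inv_pos.2 hr])] at ht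
      exact abs_le.2 ⟨by linarith [ht.1], ht.2⟩
    have := hM ((2 * Real.pi)⁻¹ • t • a) ?_
    · rwa [charFun_eq_charFun_two_pi_smul, smul_inv_smul₀ Real.two_pi_pos.ne'] at this
    rw [norm_smul, norm_smul, Real.norm_eq_abs, Real.norm_eq_abs, abs_inv,
      abs_of_pos Real.two_pi_pos]
    calc (2 * Real.pi)⁻¹ * (|t| * ‖a‖) ≤ (2 * Real.pi)⁻¹ * (2 * r⁻¹ * ‖a‖) := by gcongr
      _ = ‖a‖ / (Real.pi * r) := by field_simp
  calc μ.real {x | r < |⟪a, x⟫|}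
      ≤ 2⁻¹ * r * ‖∫ t in -2 * r⁻¹..2 * r⁻¹, 1 - MeasureTheory.charFun μ (t • a)‖ :=
        measureReal_abs_inner_gt_le_integral_charFun hr
    _ ≤ 2⁻¹ * r * (M * |2 * r⁻¹ - -2 * r⁻¹|) := by gcongr
    _ = 2 * M := by
        rw [show 2 * r⁻¹ - -2 * r⁻¹ = 4 * r⁻¹ by ring, abs_of_pos (by positivity)]
        field_simp
        ring

lemma measure_lt_norm_le_of_charFun (μ : Measure (Rd d)) [IsProbabilityMeasure μ] {δ M : ℝ}
    (hδ : 0 < δ)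
    (hM : ∀ ξ : Rd d, ‖ξ‖ ≤ (d + 1) / (Real.pi * δ) → ‖1 - _root_.charFun μ ξ‖ ≤ M) :
    μ {y | δ < ‖y‖} ≤ ENNReal.ofReal (2 * d * M) := by
  -- `d + 1` rather than `d` keeps `r` positive when `d = 0`.
  set r : ℝ := δ / (d + 1)
  have hr : 0 < r := by positivity
  have hcover : {y : Rd d | δ < ‖y‖} ⊆ ⋃ i, {x | r < |⟪EuclideanSpace.single i 1, x⟫|} := by
    intro y hy
    have : Fintype.card (Fin d) * r < ‖y‖ := by
      refine lt_of_lt_of_le ?_ hy.le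
      rw [Fintype.card_fin, mul_div_assoc', div_lt_iff₀ (by positivity)]
      linarith
    simpa [EuclideanSpace.inner_single_left] using exists_lt_abs_apply_of_card_mul_lt_norm this
  have hcoord (i : Fin d) :
      μ {x | r < |⟪EuclideanSpace.single i 1, x⟫|} ≤ ENNReal.ofReal (2 * M) := by
    rw [← ofReal_measureReal]
    refine ENNReal.ofReal_le_ofReal
      (measureReal_lt_abs_inner_le_of_charFun μ hr fun ξ hξ => hM ξ ?_)
    convert hξ using 1
    rw [PiLp.norm_single, norm_one]
    field_simp
    exact mul_div_cancel₀ _ (by positivity)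
  calc μ {y | δ < ‖y‖} ≤ μ (⋃ i, {x | r < |⟪EuclideanSpace.single i 1, x⟫|}) :=
        measure_mono hcover
    _ ≤ ∑ i, μ {x | r < |⟪EuclideanSpace.single i 1, x⟫|} := measure_iUnion_fintype_le _ _
    _ ≤ ∑ _i : Fin d, ENNReal.ofReal (2 * M) := Finset.sum_le_sum fun i _ => hcoord i
    _ = ENNReal.ofReal (2 * d * M) := by
        rw [Finset.sum_const, Finset.card_univ, Fintype.card_fin, nsmul_eq_mul,
          ← ENNReal.ofReal_natCast, ← ENNReal.ofReal_mul (Nat.cast_nonneg d)]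
        ring_nf

theorem statement_8_general (d : ℕ) (σ : ℝ)
    (ν : Measure (Rd d))
    (α1 α2 N : ℝ)
    (hexp : (σ < 1 → α1 ∈ Set.Ioc (0:ℝ) 1 ∧ α2 ∈ Set.Ioc (0:ℝ) 1) ∧
            (1 < σ → α1 ∈ Set.Ioc (1:ℝ) 2 ∧ α2 ∈ Set.Ioc (1:ℝ) 2) ∧
            (σ = 1 → α1 ∈ Set.Ioc (1:ℝ) 2 ∧ α2 ∈ Set.Ico (0:ℝ) 1))
    (hmom : (∫⁻ z in {z : Rd d | ‖z‖ ≤ 1}, ENNReal.ofReal (‖z‖ ^ α1) ∂ν)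
        + (∫⁻ z in {z : Rd d | 1 < ‖z‖}, ENNReal.ofReal (‖z‖ ^ α2) ∂ν)
        ≤ ENNReal.ofReal N) :
    ∀ δ : ℝ, 0 < δ → ∃ C : ℝ, 0 < C ∧
      ∀ t : ℝ, 0 < t → ∀ μ : Measure (Rd d), IsProbabilityMeasure μ →
        (∀ ξ, _root_.charFun μ ξ = Complex.exp ((t : ℂ) * symb σ ν ξ)) →
        μ {y : Rd d | δ < ‖y‖} ≤ ENNReal.ofReal (C * t) := by
  intro δ hδ
  set R : ℝ := (d + 1) / (Real.pi * δ)
  set K : ℝ := 3 * ((2 * Real.pi * R) ^ α1 + (2 * Real.pi * R) ^ α2) * max N 0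
  have hK : 0 ≤ K := by positivity
  refine ⟨4 * d * K + 1, by positivity, fun t ht μ _ hμ => ?_⟩
  have hcharFun (ξ : Rd d) (hξ : ‖ξ‖ ≤ R) : ‖1 - _root_.charFun μ ξ‖ ≤ 2 * t * K := by
    have hexp_le : ‖Complex.exp (t * symb σ ν ξ)‖ ≤ 1 := hμ ξ ▸ norm_charFun_le_one' μ ξ
    have hsymb : ‖symb σ ν ξ‖ ≤ K :=
      norm_symb_le hexp (hmom.trans (ENNReal.ofReal_le_ofReal (le_max_left N 0)))
        (le_max_right N 0) hξ
    rw [norm_sub_rev, hμ]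
    refine (norm_exp_sub_one_le_two_mul_norm hexp_le).trans ?_
    rw [norm_mul, Complex.norm_real, Real.norm_of_nonneg ht.le, mul_assoc]
    gcongr
  refine (measure_lt_norm_le_of_charFun μ hδ hcharFun).trans (ENNReal.ofReal_le_ofReal ?_)
  nlinarith

/-- tail estimate for the distribution of the Lévy process. -/
theorem statement_8 (d : ℕ) (σ : ℝ) (hσ : σ ∈ Set.Ioo (0:ℝ) 2)
    (ν : Measure (Rd d)) (hν : MemA σ ν)
    (α1 α2 N : ℝ)
    (hexp : (σ < 1 → α1 ∈ Set.Ioc (0:ℝ) 1 ∧ α2 ∈ Set.Ioc (0:ℝ) 1) ∧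
            (1 < σ → α1 ∈ Set.Ioc (1:ℝ) 2 ∧ α2 ∈ Set.Ioc (1:ℝ) 2) ∧
            (σ = 1 → α1 ∈ Set.Ioc (1:ℝ) 2 ∧ α2 ∈ Set.Ico (0:ℝ) 1))
    (hmom : (∫⁻ z in {z : Rd d | ‖z‖ ≤ 1}, ENNReal.ofReal (‖z‖ ^ α1) ∂ν)
        + (∫⁻ z in {z : Rd d | 1 < ‖z‖}, ENNReal.ofReal (‖z‖ ^ α2) ∂ν)
        ≤ ENNReal.ofReal N) :
    ∀ δ : ℝ, 0 < δ → ∃ C : ℝ, 0 < C ∧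
      ∀ t : ℝ, 0 < t → ∀ μ : Measure (Rd d), IsProbabilityMeasure μ →
        (∀ ξ, _root_.charFun μ ξ = Complex.exp ((t : ℂ) * symb σ ν ξ)) →
        μ {y : Rd d | δ < ‖y‖} ≤ ENNReal.ofReal (C * t) :=
  statement_8_general d σ ν α1 α2 N hexp hmom
end
end

section
/- Let σ ∈ (0,2), π ∈ 𝔄^σ, and let κ be a scaling function with scaling factor l. Assume there is n₁ > 0 such that ∫_{|y|≤1}|ξ·y|² π̃_R(dy) ≥ n₁ for all R > 0 and all unit vectors ξ ∈ ℝ^d. Then there is a constant c₂ = c₂(l) > 0 such that ∫[1 − cos(2πξ·y)]π(dy) ≥ c₂ n₁ κ(|ξ|^{−1})^{−1} for all ξ ∈ ℝ^d (with the convention κ(|ξ|^{−1})^{−1} = 0 when ξ = 0). -/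
open MeasureTheory Filter
open scoped Classical
open scoped ENNReal RealInnerProductSpace

noncomputable section

variable {d : ℕ}

/-- The rescaled measure `π̃_R = κ(R) π_R`. -/
def scaledM (κ : ℝ → ℝ) (ν : Measure (Rd d)) (R : ℝ) : Measure (Rd d) :=
  ENNReal.ofReal (κ R) • ν.map (fun y => R⁻¹ • y)

/-- `κ` is a scaling function with scaling factor `l`. -/
structure ScalingPair (κ l : ℝ → ℝ) : Prop where
  pos : ∀ r > 0, 0 < κ r
  cont : ContinuousOn κ (Set.Ioi 0)
  zero : Tendsto κ (nhdsWithin 0 (Set.Ioi 0)) (nhds 0)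
  top : Tendsto κ atTop atTop
  l_mono : MonotoneOn l (Set.Ioi 0)
  l_cont : ContinuousOn l (Set.Ioi 0)
  l_zero : Tendsto l (nhdsWithin 0 (Set.Ioi 0)) (nhds 0)
  scale : ∀ ε > 0, ∀ r > 0, κ (ε * r) ≤ l ε * κ r

/-!
Put `r = (2π|ξ|)⁻¹`. Under the rescaling `y ↦ y / r` the integrand `(ξ/|ξ| · y)²` of the
nondegeneracy condition for `π̃_r` becomes `(2π ξ·y)²`, and on the ball `|y| ≤ r` this phase lies
in `[-1, 1]`, where `t² ≤ (π²/2)(1 - cos t)`. Hence `n₁ ≤ κ(r) (π²/2) ∫ (1 - cos(2π ξ·y)) π(dy)`,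
and `κ(r) ≤ l((2π)⁻¹) κ(|ξ|⁻¹)` gives the claim with `c₂ = 2 / (π² l((2π)⁻¹))`.
-/

lemma sq_le_mul_one_sub_cos {t : ℝ} (ht : |t| ≤ 1) :
    t ^ 2 ≤ Real.pi ^ 2 / 2 * (1 - Real.cos t) := by
  have hcos := Real.cos_le_one_sub_mul_cos_sq (ht.trans (by linarith [Real.pi_gt_three]))
  calc t ^ 2 = Real.pi ^ 2 / 2 * (2 / Real.pi ^ 2 * t ^ 2) := by field_simp
    _ ≤ Real.pi ^ 2 / 2 * (1 - Real.cos t) := by gcongr; linarith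

lemma ScalingPair.factor_pos {κ l : ℝ → ℝ} (hκ : ScalingPair κ l) {ε : ℝ} (hε : 0 < ε) :
    0 < l ε := by
  have := hκ.scale ε hε 1 one_pos
  exact pos_of_mul_pos_left ((hκ.pos _ (by simpa)).trans_le this) (hκ.pos 1 one_pos).le

lemma setLIntegral_norm_le_one_scaledM (κ : ℝ → ℝ) (ν : Measure (Rd d)) {R : ℝ} (hR : 0 < R)
    {f : Rd d → ℝ≥0∞} (hf : Measurable f := by fun_prop) :
    ∫⁻ y in {y | ‖y‖ ≤ 1}, f y ∂scaledM κ ν R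
      = ENNReal.ofReal (κ R) * ∫⁻ y in {y | ‖y‖ ≤ R}, f (R⁻¹ • y) ∂ν := by
  have hpre : (fun y : Rd d => R⁻¹ • y) ⁻¹' {y | ‖y‖ ≤ 1} = {y | ‖y‖ ≤ R} := by
    ext y
    simp [norm_smul, abs_of_pos hR, inv_mul_le_iff₀ hR]
  rw [scaledM, Measure.restrict_smul, lintegral_smul_measure,
    setLIntegral_map (measurableSet_le (by fun_prop) (by fun_prop)) hf (by fun_prop), hpre]
  rfl

lemma setLIntegral_sq_inner_le_lintegral_one_sub_cos {E : Type*} [NormedAddCommGroup E]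
    [InnerProductSpace ℝ E] [MeasurableSpace E] [OpensMeasurableSpace E] (ν : Measure E)
    {ξ : E} {r : ℝ} (hr : 2 * Real.pi * ‖ξ‖ * r ≤ 1) :
    ∫⁻ y in {y | ‖y‖ ≤ r}, ENNReal.ofReal ((2 * Real.pi * ⟪ξ, y⟫) ^ 2) ∂ν
      ≤ ENNReal.ofReal (Real.pi ^ 2 / 2)
          * ∫⁻ y, ENNReal.ofReal (1 - Real.cos (2 * Real.pi * ⟪ξ, y⟫)) ∂ν := by
  rw [← lintegral_const_mul' _ _ ENNReal.ofReal_ne_top]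
  refine (setLIntegral_mono' (measurableSet_le (by fun_prop) (by fun_prop))
    fun y (hy : ‖y‖ ≤ r) => ?_).trans (setLIntegral_le_lintegral _ _)
  rw [← ENNReal.ofReal_mul (by positivity)]
  refine ENNReal.ofReal_le_ofReal (sq_le_mul_one_sub_cos ?_)
  calc |2 * Real.pi * ⟪ξ, y⟫| = 2 * Real.pi * |⟪ξ, y⟫| := by
        rw [abs_mul, abs_of_pos (by positivity)]
    _ ≤ 2 * Real.pi * (‖ξ‖ * r) := by
        gcongr
        exact (abs_real_inner_le_norm ξ y).trans (by gcongr)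
    _ ≤ 1 := by linarith

lemma setLIntegral_scaledM_le_lintegral_one_sub_cos (κ : ℝ → ℝ) (ν : Measure (Rd d))
    {ξ : Rd d} (hξ : ξ ≠ 0) :
    ∫⁻ y in {y | ‖y‖ ≤ 1}, ENNReal.ofReal (⟪‖ξ‖⁻¹ • ξ, y⟫ ^ 2)
        ∂scaledM κ ν ((2 * Real.pi)⁻¹ * ‖ξ‖⁻¹)
      ≤ ENNReal.ofReal (κ ((2 * Real.pi)⁻¹ * ‖ξ‖⁻¹)) * (ENNReal.ofReal (Real.pi ^ 2 / 2)
          * ∫⁻ y, ENNReal.ofReal (1 - Real.cos (2 * Real.pi * ⟪ξ, y⟫)) ∂ν) := by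
  have hξn : 0 < ‖ξ‖ := norm_pos_iff.2 hξ
  set R : ℝ := (2 * Real.pi)⁻¹ * ‖ξ‖⁻¹
  have hRξ : 2 * Real.pi * ‖ξ‖ * R = 1 := by simp only [R]; field_simp
  have hphase (y : Rd d) : ⟪‖ξ‖⁻¹ • ξ, R⁻¹ • y⟫ = 2 * Real.pi * ⟪ξ, y⟫ := by
    simp only [real_inner_smul_left, real_inner_smul_right, R]
    field_simp
  rw [setLIntegral_norm_le_one_scaledM κ ν (by positivity)]
  simp only [hphase]
  gcongr
  exact setLIntegral_sq_inner_le_lintegral_one_sub_cos ν hRξ.le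

lemma ENNReal.ofReal_mul_le_of_le_ofReal_mul {c x b : ℝ} {J : ℝ≥0∞} (hc : 0 ≤ c)
    (hcb : c * b ≤ 1) (h : ENNReal.ofReal x ≤ ENNReal.ofReal b * J) :
    ENNReal.ofReal (c * x) ≤ J := by
  calc ENNReal.ofReal (c * x) ≤ ENNReal.ofReal c * (ENNReal.ofReal b * J) := by
        rw [ENNReal.ofReal_mul hc]
        gcongr
    _ = ENNReal.ofReal (c * b) * J := by rw [ENNReal.ofReal_mul hc, mul_assoc]
    _ ≤ J := by
        grw [hcb, ENNReal.ofReal_one, one_mul]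

theorem statement_10_general (d : ℕ)
    (ν : Measure (Rd d))
    (κ l : ℝ → ℝ) (hκ : ScalingPair κ l) (n1 : ℝ)
    (hlow : ∀ R > 0, ∀ ξ : Rd d, ‖ξ‖ = 1 →
      ENNReal.ofReal n1
        ≤ ∫⁻ y in {y : Rd d | ‖y‖ ≤ 1}, ENNReal.ofReal (⟪ξ, y⟫ ^ 2) ∂scaledM κ ν R) :
    ∃ c2 : ℝ, 0 < c2 ∧ ∀ ξ : Rd d,
      ENNReal.ofReal (c2 * n1 * (if ξ = 0 then 0 else (κ ‖ξ‖⁻¹)⁻¹))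
        ≤ ∫⁻ y, ENNReal.ofReal (1 - Real.cos (2 * Real.pi * ⟪ξ, y⟫)) ∂ν := by
  set ε : ℝ := (2 * Real.pi)⁻¹
  have hε : 0 < ε := by positivity
  have hlε := hκ.factor_pos hε
  refine ⟨2 / Real.pi ^ 2 / l ε, by positivity, fun ξ => ?_⟩
  rcases eq_or_ne ξ 0 with rfl | hξ
  · simp
  have hξn : 0 < ‖ξ‖ := norm_pos_iff.2 hξ
  have hκξ := hκ.pos _ (inv_pos.2 hξn)
  have hunit : ‖‖ξ‖⁻¹ • ξ‖ = 1 := by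
    rw [norm_smul, norm_inv, norm_norm, inv_mul_cancel₀ hξn.ne']
  have hn1 := (hlow _ (by positivity) _ hunit).trans
    (setLIntegral_scaledM_le_lintegral_one_sub_cos κ ν hξ)
  rw [← mul_assoc, ← ENNReal.ofReal_mul (hκ.pos _ (by positivity)).le] at hn1
  rw [if_neg hξ, mul_right_comm]
  refine ENNReal.ofReal_mul_le_of_le_ofReal_mul (by positivity) ?_ hn1
  have hscale : κ (ε * ‖ξ‖⁻¹) ≤ l ε * κ ‖ξ‖⁻¹ := hκ.scale ε hε _ (inv_pos.2 hξn)
  calc 2 / Real.pi ^ 2 / l ε * (κ ‖ξ‖⁻¹)⁻¹ * (κ (ε * ‖ξ‖⁻¹) * (Real.pi ^ 2 / 2))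
      = κ (ε * ‖ξ‖⁻¹) / (l ε * κ ‖ξ‖⁻¹) := by field_simp
    _ ≤ 1 := div_le_one_of_le₀ hscale (by positivity)

/-- lower bound on the real part of the symbol. -/
theorem statement_10 (d : ℕ) (σ : ℝ) (hσ : σ ∈ Set.Ioo (0:ℝ) 2)
    (ν : Measure (Rd d)) (hν : MemA σ ν)
    (κ l : ℝ → ℝ) (hκ : ScalingPair κ l) (n1 : ℝ) (hn1 : 0 < n1)
    (hlow : ∀ R > 0, ∀ ξ : Rd d, ‖ξ‖ = 1 →
      ENNReal.ofReal n1
        ≤ ∫⁻ y in {y : Rd d | ‖y‖ ≤ 1}, ENNReal.ofReal (⟪ξ, y⟫ ^ 2) ∂scaledM κ ν R) :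
    ∃ c2 : ℝ, 0 < c2 ∧ ∀ ξ : Rd d,
      ENNReal.ofReal (c2 * n1 * (if ξ = 0 then 0 else (κ ‖ξ‖⁻¹)⁻¹))
        ≤ ∫⁻ y, ENNReal.ofReal (1 - Real.cos (2 * Real.pi * ⟪ξ, y⟫)) ∂ν :=
  statement_10_general d ν κ l hκ n1 hlow
end
end

section
/- Assume Assumption A2 holds for κ. Then there exists K₀ ≥ 3 (depending only on l) such that whenever Q_δ(t,x) ∩ Q_{δ'}(r,z) ≠ ∅ with δ' ≤ δ, the set Q_{K₀δ}(t,x) contains both Q_δ(t,x) and Q_{δ'}(r,z), and moreover |Q_δ(t,x)| ≤ |Q_{K₀δ}(t,x)| ≤ K₀^d l(K₀) |Q_δ(t,x)|. -/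
open MeasureTheory Filter
open scoped ENNReal

noncomputable section

/-- The "parabolic cylinder" `Q_δ(t,x) = (t − κ(δ), t + κ(δ)) × B_δ(x)`. -/
def Qset (d : ℕ) (κ : ℝ → ℝ) (δ t : ℝ) (x : Rd d) : Set (ℝ × Rd d) :=
  Set.Ioo (t - κ δ) (t + κ δ) ×ˢ Metric.ball x δ

/-- Assumption A1: `κ` is continuous, vanishing at `0` and tending to `∞`. -/
def A1prop (κ : ℝ → ℝ) : Prop :=
  (∀ r > 0, 0 < κ r) ∧ ContinuousOn κ (Set.Ioi 0) ∧
  Tendsto κ (nhdsWithin 0 (Set.Ioi 0)) (nhds 0) ∧ Tendsto κ atTop atTop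

/-- Assumption A2: `κ(εr) ≤ l(ε)κ(r)` for a nondecreasing continuous `l` with
`l(0+) = 0`. -/
def A2prop (κ l : ℝ → ℝ) : Prop :=
  (∀ r > 0, 0 < κ r) ∧ MonotoneOn l (Set.Ioi 0) ∧ ContinuousOn l (Set.Ioi 0) ∧
  Tendsto l (nhdsWithin 0 (Set.Ioi 0)) (nhds 0) ∧
  ∀ ε > 0, ∀ r > 0, κ (ε * r) ≤ l ε * κ r

/-- engulfing property of the family `𝒬`. -/
theorem statement_16 (d : ℕ) (κ l : ℝ → ℝ) (h : A2prop κ l) :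
    ∃ K0 : ℝ, 3 ≤ K0 ∧ ∀ δ δ' t r : ℝ, ∀ x z : Rd d, 0 < δ' → δ' ≤ δ →
      (Qset d κ δ t x ∩ Qset d κ δ' r z).Nonempty →
      Qset d κ δ t x ⊆ Qset d κ (K0 * δ) t x ∧
      Qset d κ δ' r z ⊆ Qset d κ (K0 * δ) t x ∧
      volume (Qset d κ δ t x) ≤ volume (Qset d κ (K0 * δ) t x) ∧
      volume (Qset d κ (K0 * δ) t x)
        ≤ ENNReal.ofReal (K0 ^ d * l K0) * volume (Qset d κ δ t x) := by
  obtain ⟨hκ, hlm, hlc, hl0, hle⟩ := h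
  have hl1 : 1 ≤ l 1 := by
    have h1 := hle 1 one_pos 1 one_pos
    have h2 := hκ 1 one_pos
    rw [one_mul] at h1
    nlinarith
  set c : ℝ := 1 / (2 * l 1 + 1) with hc
  have hcpos : 0 < c := by rw [hc]; positivity
  have hev : ∀ᶠ ε in nhdsWithin (0:ℝ) (Set.Ioi 0), l ε < c :=
    hl0.eventually_lt_const hcpos
  obtain ⟨ε, hεlt, hεpos⟩ := (hev.and self_mem_nhdsWithin).exists
  have hεpos : (0:ℝ) < ε := hεpos
  refine ⟨max 3 (1/ε), le_max_left _ _, ?_⟩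
  set K0 : ℝ := max 3 (1/ε) with hK0def
  have hK3 : (3:ℝ) ≤ K0 := le_max_left _ _
  have hK0pos : 0 < K0 := by linarith
  have hinvpos : 0 < 1 / K0 := by positivity
  have hinvε : 1 / K0 ≤ ε := by
    rw [div_le_iff₀ hK0pos]
    calc (1:ℝ) = ε * (1/ε) := by field_simp
    _ ≤ ε * K0 := by
        gcongr
        exact le_max_right _ _
  have hlK : l (1/K0) < c := lt_of_le_of_lt (hlm (Set.mem_Ioi.mpr hinvpos) (Set.mem_Ioi.mpr hεpos) hinvε) hεlt
  have hlKnn : 0 ≤ l (1/K0) := by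
    have := hκ 1 one_pos
    have h1 := hle (1/K0) hinvpos 1 one_pos
    have h2 := hκ (1/K0 * 1) (by positivity)
    nlinarith
  intro δ δ' t r x z hδ' hδ'δ hne
  have hδ : 0 < δ := lt_of_lt_of_le hδ' hδ'δ
  have hKδ : 0 < K0 * δ := by positivity
  -- key scaling inequality
  have hkey : κ δ ≤ l (1/K0) * κ (K0 * δ) := by
    have := hle (1/K0) hinvpos (K0*δ) hKδ
    rwa [show (1/K0) * (K0*δ) = δ by field_simp] at this
  have hκδ := hκ δ hδ
  have hκKδ := hκ (K0*δ) hKδ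
  have hcδ : (2 * l 1 + 1) * κ δ ≤ κ (K0 * δ) := by
    have h1 : (2 * l 1 + 1) * κ δ ≤ (2 * l 1 + 1) * (l (1/K0) * κ (K0*δ)) := by
      have : (0:ℝ) ≤ 2 * l 1 + 1 := by linarith
      nlinarith
    have h2 : (2 * l 1 + 1) * (l (1/K0) * κ (K0*δ)) ≤ (2 * l 1 + 1) * (c * κ (K0*δ)) := by
      gcongr
    have h3 : (2 * l 1 + 1) * (c * κ (K0*δ)) = κ (K0*δ) := by
      rw [hc]; field_simp
    linarith
  have hmono : κ δ ≤ κ (K0 * δ) := by nlinarith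
  -- smaller radius: κ δ' ≤ l 1 * κ δ
  have hδ'κ : κ δ' ≤ l 1 * κ δ := by
    have h1 := hle (δ'/δ) (by positivity) δ hδ
    rw [div_mul_cancel₀ _ hδ.ne'] at h1
    have h2 : l (δ'/δ) ≤ l 1 := by
      refine hlm (Set.mem_Ioi.mpr (by positivity)) (Set.mem_Ioi.mpr one_pos) ?_
      rw [div_le_one hδ]; exact hδ'δ
    nlinarith
  have hκδ' := hκ δ' hδ'
  obtain ⟨⟨s, y⟩, hmem⟩ := hne
  simp only [Qset, Set.mem_inter_iff, Set.mem_prod, Set.mem_Ioo, Metric.mem_ball] at hmem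
  obtain ⟨⟨⟨hs1a, hs1b⟩, hy1⟩, ⟨hs2a, hs2b⟩, hy2⟩ := hmem
  constructor
  · -- Qδ ⊆ QK0δ
    rintro ⟨u, w⟩ hm
    simp only [Qset, Set.mem_prod, Set.mem_Ioo, Metric.mem_ball] at hm ⊢
    obtain ⟨⟨h1, h2⟩, hw⟩ := hm
    have hδK : δ ≤ K0 * δ := le_mul_of_one_le_left hδ.le (by linarith)
    exact ⟨⟨by linarith, by linarith⟩, by linarith⟩
  constructor
  · -- Qδ' ⊆ QK0δ
    rintro ⟨u, w⟩ hm
    simp only [Qset, Set.mem_prod, Set.mem_Ioo, Metric.mem_ball] at hm ⊢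
    obtain ⟨⟨h1, h2⟩, hw⟩ := hm
    have hdw : dist w x ≤ dist w z + dist z y + dist y x := by
      calc dist w x ≤ dist w y + dist y x := dist_triangle _ _ _
      _ ≤ (dist w z + dist z y) + dist y x := by gcongr; exact dist_triangle _ _ _
    have hzy : dist z y < δ' := by rw [dist_comm]; exact hy2
    have h3K : 3 * δ ≤ K0 * δ := mul_le_mul_of_nonneg_right hK3 hδ.le
    refine ⟨⟨?_, ?_⟩, by linarith⟩ <;> linarith
  -- volume formula
  have hvol : ∀ a : ℝ, 0 < a → volume (Qset d κ a t x)
      = ENNReal.ofReal (2 * κ a) *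
        (ENNReal.ofReal (a ^ d) * volume (Metric.ball (0 : Rd d) 1)) := by
    intro a ha
    rw [Qset, Measure.volume_eq_prod, Measure.prod_prod, Real.volume_Ioo,
      Measure.addHaar_ball_of_pos _ x ha, finrank_euclideanSpace_fin,
      show t + κ a - (t - κ a) = 2 * κ a by ring]
  constructor
  · refine measure_mono ?_
    rintro ⟨u, w⟩ hm
    simp only [Qset, Set.mem_prod, Set.mem_Ioo, Metric.mem_ball] at hm ⊢
    obtain ⟨⟨h1, h2⟩, hw⟩ := hm
    have hδK : δ ≤ K0 * δ := le_mul_of_one_le_left hδ.le (by linarith)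
    exact ⟨⟨by linarith, by linarith⟩, by linarith⟩
  · rw [hvol δ hδ, hvol (K0*δ) hKδ]
    have hlK0 : 1 ≤ l K0 := hl1.trans (hlm (Set.mem_Ioi.mpr one_pos) (Set.mem_Ioi.mpr (by positivity)) (by linarith))
    have hreal : 2 * κ (K0*δ) * (K0*δ) ^ d ≤ K0 ^ d * l K0 * (2 * κ δ * δ ^ d) := by
      have h1 : κ (K0 * δ) ≤ l K0 * κ δ := hle K0 hK0pos δ hδ
      rw [mul_pow]
      have hp : (0:ℝ) ≤ 2 * (K0 ^ d * δ ^ d) := by positivity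
      nlinarith [mul_le_mul_of_nonneg_left h1 hp]
    have e1 : ENNReal.ofReal (2 * κ (K0*δ) * (K0*δ) ^ d)
        = ENNReal.ofReal (2 * κ (K0*δ)) * ENNReal.ofReal ((K0*δ) ^ d) :=
      ENNReal.ofReal_mul (by positivity)
    have e2 : ENNReal.ofReal (K0 ^ d * l K0 * (2 * κ δ * δ ^ d))
        = ENNReal.ofReal (K0 ^ d * l K0) * (ENNReal.ofReal (2 * κ δ) * ENNReal.ofReal (δ ^ d)) := by
      rw [ENNReal.ofReal_mul (show (0:ℝ) ≤ K0 ^ d * l K0 by positivity),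
        ENNReal.ofReal_mul (show (0:ℝ) ≤ 2 * κ δ by positivity)]
    calc ENNReal.ofReal (2 * κ (K0*δ)) *
          (ENNReal.ofReal ((K0*δ) ^ d) * volume (Metric.ball (0 : Rd d) 1))
        = ENNReal.ofReal (2 * κ (K0*δ) * (K0*δ) ^ d) * volume (Metric.ball (0 : Rd d) 1) := by
          rw [e1]; ring
      _ ≤ ENNReal.ofReal (K0 ^ d * l K0 * (2 * κ δ * δ ^ d)) * volume (Metric.ball (0 : Rd d) 1) :=
          mul_le_mul_left (ENNReal.ofReal_le_ofReal hreal) _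
      _ = ENNReal.ofReal (K0 ^ d * l K0) *
          (ENNReal.ofReal (2 * κ δ) * (ENNReal.ofReal (δ ^ d) * volume (Metric.ball (0 : Rd d) 1))) := by
          rw [e2]; ring
end
end

section
/- Assume Assumption A2 holds for κ, and let E ⊆ ℝ×ℝ^d be a union of a finite collection {Q'} of sets from the family {Q_δ(t,x) : (t,x) ∈ ℝ^{1+d}, δ > 0}. Then, with c = 1/(K₀^d l(K₀)) > 0, where K₀ is the engulfing constant from Assumption A2, there is a pairwise disjoint subcollection Q¹ = Q_{δ₁}(t₁,x₁), …, Q^m = Q_{δ_m}(t_m,x_m) of {Q'} such that Σ_{k=1}^m |Q^k| ≥ c|E|. -/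
open MeasureTheory Filter
open scoped ENNReal

noncomputable section

/-!
Greedy selection: take the set of largest radius, discard every set meeting it and recurse.
Each discarded set meets a selected one of radius at least its own, so by engulfing it lies
in the `K₀`-enlargement of that one. Hence `E` is covered by the enlargements of the selected,
pairwise disjoint sets, and the doubling bound `|Q_{K₀δ}| ≤ K₀^d l(K₀) |Q_δ|` gives the
estimate.
-/

open Set

theorem Finset.exists_pairwiseDisjoint_subset_biUnion_enlargement {α ι β : Type*}
    [LinearOrder β] (Q Q' : ι → Set α) (r : ι → β) (s : Finset ι)
    (hengulf : ∀ i ∈ s, ∀ j ∈ s, r j ≤ r i → (Q i ∩ Q j).Nonempty → Q j ⊆ Q' i) :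
    ∃ m ⊆ s, (m : Set ι).PairwiseDisjoint Q ∧ ⋃ i ∈ s, Q i ⊆ ⋃ j ∈ m, Q' j := by
  classical
  induction s using Finset.strongInduction with
  | H s ih =>
  rcases s.eq_empty_or_nonempty with rfl | hne
  · exact ⟨∅, subset_rfl, by simp, by simp⟩
  obtain ⟨i, hi, hmax⟩ := s.exists_max_image r hne
  set s' := s.filter fun j => j ≠ i ∧ Disjoint (Q j) (Q i)
  have hs' : s' ⊂ s := Finset.filter_ssubset.2 ⟨i, hi, by simp⟩
  obtain ⟨m, hms', hm, hcov⟩ := ih s' hs' fun a ha b hb =>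
    hengulf a (Finset.filter_subset _ _ ha) b (Finset.filter_subset _ _ hb)
  refine ⟨insert i m, Finset.insert_subset hi (hms'.trans hs'.subset), ?_, ?_⟩
  · rw [Finset.coe_insert]
    exact hm.insert fun j hj _ => (Finset.mem_filter.1 (hms' hj)).2.2.symm
  · intro y hy
    obtain ⟨j, hj, hyj⟩ := mem_iUnion₂.1 hy
    by_cases hdisc : j ≠ i ∧ Disjoint (Q j) (Q i)
    · have hy' : y ∈ ⋃ k ∈ s', Q k :=
        Set.mem_biUnion (Finset.mem_filter.2 ⟨hj, hdisc⟩) hyj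
      exact Set.biUnion_mono (fun k hk => Finset.mem_insert_of_mem hk) (fun _ _ => subset_rfl)
        (hcov hy')
    · have hmeet : (Q i ∩ Q j).Nonempty := by
        by_cases hji : j = i
        · subst hji
          exact ⟨y, hyj, hyj⟩
        · rw [Set.inter_comm, ← Set.not_disjoint_iff_nonempty_inter]
          exact fun h => hdisc ⟨hji, h⟩
      exact Set.mem_biUnion (Finset.mem_insert_self i m)
        (hengulf i hi j hj (hmax j hj) hmeet hyj)

theorem MeasureTheory.measure_biUnion_le_mul_sum_of_subset_biUnion {α ι : Type*}
    [MeasurableSpace α] (μ : Measure α) {A B : ι → Set α} {s m : Finset ι} {C : ℝ≥0∞}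
    (hcov : ⋃ i ∈ s, A i ⊆ ⋃ j ∈ m, B j) (hB : ∀ j ∈ m, μ (B j) ≤ C * μ (A j)) :
    μ (⋃ i ∈ s, A i) ≤ C * ∑ j ∈ m, μ (A j) :=
  calc μ (⋃ i ∈ s, A i) ≤ ∑ j ∈ m, μ (B j) :=
        (measure_mono hcov).trans (measure_biUnion_finset_le m B)
    _ ≤ C * ∑ j ∈ m, μ (A j) := by
      rw [Finset.mul_sum]
      exact Finset.sum_le_sum hB

-- For `C ≤ 0` the left side vanishes, as `ENNReal.ofReal (1 / C) = 0`.
theorem ENNReal.ofReal_one_div_mul_le {C : ℝ} {a b : ℝ≥0∞}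
    (h : b ≤ ENNReal.ofReal C * a) : ENNReal.ofReal (1 / C) * b ≤ a := by
  rcases le_or_gt C 0 with hC | hC
  · rw [ENNReal.ofReal_of_nonpos (one_div_nonpos.2 hC), zero_mul]
    exact zero_le
  calc ENNReal.ofReal (1 / C) * b
      ≤ ENNReal.ofReal (1 / C) * (ENNReal.ofReal C * a) := by gcongr
    _ = a := by
      rw [← mul_assoc, ← ENNReal.ofReal_mul (by positivity), one_div, inv_mul_cancel₀ hC.ne',
        ENNReal.ofReal_one, one_mul]

theorem Qset_nonempty {d : ℕ} {κ : ℝ → ℝ} {δ : ℝ} (t : ℝ) (x : Rd d) (hκ : 0 < κ δ)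
    (hδ : 0 < δ) : (Qset d κ δ t x).Nonempty :=
  ⟨(t, x), ⟨by linarith, by linarith⟩, Metric.mem_ball_self hδ⟩

theorem statement_17_general (d : ℕ) (κ l : ℝ → ℝ) (h : A2prop κ l)
    (K0 : ℝ)
    (heng : ∀ δ δ' t r : ℝ, ∀ x z : Rd d, 0 < δ' → δ' ≤ δ →
      (Qset d κ δ t x ∩ Qset d κ δ' r z).Nonempty →
      Qset d κ δ t x ∪ Qset d κ δ' r z ⊆ Qset d κ (K0 * δ) t x ∧
      volume (Qset d κ (K0 * δ) t x)
        ≤ ENNReal.ofReal (K0 ^ d * l K0) * volume (Qset d κ δ t x))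
    {ι : Type} (s : Finset ι) (δ : ι → ℝ) (t : ι → ℝ) (x : ι → Rd d)
    (hδ : ∀ i ∈ s, 0 < δ i) :
    ∃ m : Finset ι, m ⊆ s ∧
      (↑m : Set ι).Pairwise (fun i j =>
        Disjoint (Qset d κ (δ i) (t i) (x i)) (Qset d κ (δ j) (t j) (x j))) ∧
      ENNReal.ofReal (1 / (K0 ^ d * l K0))
          * volume (⋃ i ∈ s, Qset d κ (δ i) (t i) (x i))
        ≤ ∑ i ∈ m, volume (Qset d κ (δ i) (t i) (x i)) := by
  obtain ⟨m, hms, hdisj, hcov⟩ :=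
    Finset.exists_pairwiseDisjoint_subset_biUnion_enlargement
      (fun i => Qset d κ (δ i) (t i) (x i))
      (fun i => Qset d κ (K0 * δ i) (t i) (x i)) δ s fun i _ j hj hji hmeet =>
        subset_union_right.trans (heng _ _ _ _ _ _ (hδ j hj) hji hmeet).1
  have hvol (j : ι) (hj : j ∈ m) : volume (Qset d κ (K0 * δ j) (t j) (x j))
      ≤ ENNReal.ofReal (K0 ^ d * l K0) * volume (Qset d κ (δ j) (t j) (x j)) := by
    have hδj := hδ j (hms hj)
    refine (heng _ _ _ (t j) _ (x j) hδj le_rfl ?_).2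
    rw [inter_self]
    exact Qset_nonempty _ _ (h.1 _ hδj) hδj
  exact ⟨m, hms, hdisj, ENNReal.ofReal_one_div_mul_le
    (measure_biUnion_le_mul_sum_of_subset_biUnion volume hcov hvol)⟩

/-- Vitali covering lemma for the family `𝒬`. -/
theorem statement_17 (d : ℕ) (κ l : ℝ → ℝ) (h : A2prop κ l)
    (K0 : ℝ) (hK0 : 3 ≤ K0)
    (heng : ∀ δ δ' t r : ℝ, ∀ x z : Rd d, 0 < δ' → δ' ≤ δ →
      (Qset d κ δ t x ∩ Qset d κ δ' r z).Nonempty →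
      Qset d κ δ t x ∪ Qset d κ δ' r z ⊆ Qset d κ (K0 * δ) t x ∧
      volume (Qset d κ (K0 * δ) t x)
        ≤ ENNReal.ofReal (K0 ^ d * l K0) * volume (Qset d κ δ t x))
    {ι : Type} (s : Finset ι) (δ : ι → ℝ) (t : ι → ℝ) (x : ι → Rd d)
    (hδ : ∀ i ∈ s, 0 < δ i) :
    ∃ m : Finset ι, m ⊆ s ∧
      (↑m : Set ι).Pairwise (fun i j =>
        Disjoint (Qset d κ (δ i) (t i) (x i)) (Qset d κ (δ j) (t j) (x j))) ∧
      ENNReal.ofReal (1 / (K0 ^ d * l K0))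
          * volume (⋃ i ∈ s, Qset d κ (δ i) (t i) (x i))
        ≤ ∑ i ∈ m, volume (Qset d κ (δ i) (t i) (x i)) :=
  statement_17_general d κ l h K0 heng s δ t x hδ
end
end
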